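/- Let H be the subgroup of SL(2,ℤ) generated by −I together with the six matrices [[1,1],[0,1]], [[1,0],[11,1]], [[−2,−1],[11,5]], [[2,−1],[11,−5]], [[10,3],[33,10]], [[23,8],[66,23]], and let T = [[1,1],[0,1]]. Then the level of H is 11: the normal closure of {T¹¹} in SL(2,ℤ) is contained in H, and for every natural number n with 1 ≤ n ≤ 10, the normal closure of {Tⁿ} in SL(2,ℤ) is not contained in H. -/

import Mathlib

open Matrix
open scoped MatrixGroups

/-- `T = [[1,1],[0,1]]` in `SL(2,ℤ)`. -/
def T : SL(2, ℤ) := ⟨!![1, 1; 0, 1], by norm_num [Matrix.det_fin_two_of]⟩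

/-- `[[1,0],[11,1]]`. -/
def m2 : SL(2, ℤ) := ⟨!![1, 0; 11, 1], by norm_num [Matrix.det_fin_two_of]⟩

/-- `[[−2,−1],[11,5]]`. -/
def m3 : SL(2, ℤ) := ⟨!![-2, -1; 11, 5], by norm_num [Matrix.det_fin_two_of]⟩

/-- `[[2,−1],[11,−5]]`. -/
def m4 : SL(2, ℤ) := ⟨!![2, -1; 11, -5], by norm_num [Matrix.det_fin_two_of]⟩

/-- `[[10,3],[33,10]]`. -/
def m5 : SL(2, ℤ) := ⟨!![10, 3; 33, 10], by norm_num [Matrix.det_fin_two_of]⟩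

/-- `[[23,8],[66,23]]`. -/
def m6 : SL(2, ℤ) := ⟨!![23, 8; 66, 23], by norm_num [Matrix.det_fin_two_of]⟩

/-- The subgroup `H ≤ SL(2,ℤ)` generated by `−I` and the six listed matrices. -/
def H : Subgroup SL(2, ℤ) :=
  Subgroup.closure {-1, T, m2, m3, m4, m5, m6}

/-!
For `g` with first column `(a, c)`, the conjugate `g * T ^ n * g⁻¹ = parabolic n a c` depends only
on the cusp `a / c`, and conjugating it by `h` replaces `(a, c)` by `h • (a, c)`. Up to powers of
`T`, the isometric circles of `m2, …, m6` and their inverses cover `[-1/2, 1/2]` except for the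
cusps `0, ±1/3, ±3/11, ±4/11`, so a Euclidean descent on `|c|` moves every cusp into one of the
four `H`-classes `∞, 0, 1/3, 3/11`. Their widths are `1, 11, 11, 1`, witnessed by `T`, `m2⁻¹` and
the cycle products `m5 * m6⁻¹ * m4⁻¹ * m2 * m3 * T⁻¹ = parabolic 11 1 3` and
`m4 * m6 * m3⁻¹ * m5⁻¹ = parabolic 1 3 11`; hence every conjugate of `T ^ 11` lies in `H`.
Conversely `H ≤ Γ₀(11)`, while `S * T ^ n * S⁻¹` has lower left entry `-n`.
-/

open CongruenceSubgroup

/-- The conjugate of `T ^ n` by any matrix with first column `(a, c)` (see `conj_T_zpow`). -/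
def parabolic (n a c : ℤ) : SL(2, ℤ) :=
  ⟨!![1 - n * a * c, n * a ^ 2; -(n * c ^ 2), 1 + n * a * c], by rw [det_fin_two_of]; ring⟩

theorem parabolic_zero (a c : ℤ) : parabolic 0 a c = 1 := by
  apply Matrix.SpecialLinearGroup.ext; intro i j
  fin_cases i <;> fin_cases j <;> simp [parabolic]

theorem parabolic_add (m n a c : ℤ) :
    parabolic (m + n) a c = parabolic m a c * parabolic n a c := by
  apply Matrix.SpecialLinearGroup.ext; intro i j
  rw [Matrix.SpecialLinearGroup.coe_mul]
  fin_cases i <;> fin_cases j <;> simp [parabolic, mul_apply, Fin.sum_univ_two] <;> ring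

theorem parabolic_zpow (n a c k : ℤ) : parabolic n a c ^ k = parabolic (k * n) a c := by
  have hinv : (parabolic n a c)⁻¹ = parabolic (-n) a c :=
    (eq_inv_of_mul_eq_one_left (by rw [← parabolic_add, neg_add_cancel, parabolic_zero])).symm
  induction k using Int.induction_on with
  | zero => rw [zpow_zero, zero_mul, parabolic_zero]
  | succ k ih => rw [_root_.zpow_add_one, ih, ← parabolic_add, add_mul, one_mul]
  | pred k ih => rw [_root_.zpow_sub_one, ih, hinv, ← parabolic_add]; ring_nf

theorem parabolic_mul_mul (n k a c : ℤ) :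
    parabolic n (k * a) (k * c) = parabolic (k ^ 2 * n) a c := by
  apply Matrix.SpecialLinearGroup.ext; intro i j
  fin_cases i <;> fin_cases j <;> simp [parabolic] <;> ring

theorem parabolic_neg_neg (n a c : ℤ) : parabolic n (-a) (-c) = parabolic n a c := by
  simpa using parabolic_mul_mul n (-1) a c

theorem mul_parabolic (g : SL(2, ℤ)) (n a c : ℤ) :
    g * parabolic n a c = parabolic n (g 0 0 * a + g 0 1 * c) (g 1 0 * a + g 1 1 * c) * g := by
  have hdet : g 0 0 * g 1 1 - g 0 1 * g 1 0 = 1 := by rw [← det_fin_two]; exact g.det_coe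
  apply Matrix.SpecialLinearGroup.ext; intro i j
  rw [Matrix.SpecialLinearGroup.coe_mul, Matrix.SpecialLinearGroup.coe_mul]
  fin_cases i <;> fin_cases j <;>
    simp only [parabolic, Fin.zero_eta, Fin.mk_one, Fin.isValue, mul_apply, of_apply, cons_val',
      cons_val_zero, cons_val_one, cons_val_fin_one, Fin.sum_univ_two, mul_neg, neg_mul]
  · linear_combination n * c * (g 0 0 * a + g 0 1 * c) * hdet
  · linear_combination -n * a * (g 0 0 * a + g 0 1 * c) * hdet
  · linear_combination n * c * (g 1 0 * a + g 1 1 * c) * hdet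
  · linear_combination -n * a * (g 1 0 * a + g 1 1 * c) * hdet

theorem T_zpow_eq_parabolic (m : ℤ) : T ^ m = parabolic m 1 0 := by
  have hT : T = parabolic 1 1 0 := by decide
  rw [hT, parabolic_zpow, mul_one]

theorem conj_T_zpow (g : SL(2, ℤ)) (n : ℤ) : g * T ^ n * g⁻¹ = parabolic n (g 0 0) (g 1 0) := by
  simp [T_zpow_eq_parabolic, mul_parabolic]

section Membership

variable {K : Subgroup SL(2, ℤ)} {n a c : ℤ}

theorem parabolic_mem_iff {g : SL(2, ℤ)} (hg : g ∈ K) :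
    parabolic n (g 0 0 * a + g 0 1 * c) (g 1 0 * a + g 1 1 * c) ∈ K ↔ parabolic n a c ∈ K := by
  rw [← mul_inv_cancel_right (parabolic n _ _) g, ← mul_parabolic,
    K.mul_mem_cancel_right (K.inv_mem hg), K.mul_mem_cancel_left hg]

theorem parabolic_mul_mul_mem (h : parabolic n a c ∈ K) (k : ℤ) :
    parabolic n (k * a) (k * c) ∈ K := by
  rw [parabolic_mul_mul, ← parabolic_zpow]
  exact zpow_mem h _

theorem parabolic_add_mul_mem (hT : T ∈ K) (h : parabolic n a c ∈ K) (m : ℤ) :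
    parabolic n (a + m * c) c ∈ K := by
  simpa [T_zpow_eq_parabolic, parabolic, mul_comm] using (parabolic_mem_iff (zpow_mem hT m)).2 h

end Membership

theorem normalClosure_T_pow_le {K : Subgroup SL(2, ℤ)} {n : ℕ}
    (h : ∀ a c, parabolic n a c ∈ K) : Subgroup.normalClosure {T ^ n} ≤ K := by
  refine (Subgroup.closure_le _).2 fun x hx => ?_
  obtain ⟨_, rfl, hconj⟩ := Group.mem_conjugatesOfSet_iff.1 hx
  obtain ⟨g, rfl⟩ := isConj_iff.1 hconj
  rw [← zpow_natCast, conj_T_zpow]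
  exact h _ _

theorem not_normalClosure_T_pow_le_Gamma0 {N n : ℕ} (h : ¬N ∣ n) :
    ¬Subgroup.normalClosure {T ^ n} ≤ Gamma0 N := by
  intro hle
  have hmem : ModularGroup.S * T ^ n * ModularGroup.S⁻¹ ∈ Gamma0 N :=
    hle (Subgroup.normalClosure_normal.conj_mem _
      (Subgroup.subset_normalClosure (Set.mem_singleton _)) _)
  rw [← zpow_natCast, conj_T_zpow, Gamma0_mem] at hmem
  simp only [parabolic, ModularGroup.coe_S] at hmem
  exact h ((ZMod.natCast_eq_zero_iff n N).1 (by simpa using hmem))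

theorem T_mem_H : T ∈ H := Subgroup.subset_closure (by simp)
theorem m2_mem_H : m2 ∈ H := Subgroup.subset_closure (by simp)
theorem m3_mem_H : m3 ∈ H := Subgroup.subset_closure (by simp)
theorem m4_mem_H : m4 ∈ H := Subgroup.subset_closure (by simp)
theorem m5_mem_H : m5 ∈ H := Subgroup.subset_closure (by simp)
theorem m6_mem_H : m6 ∈ H := Subgroup.subset_closure (by simp)

theorem H_le_Gamma0 : H ≤ Gamma0 11 := by
  rw [H, Subgroup.closure_le]
  rintro _ (rfl | rfl | rfl | rfl | rfl | rfl | rfl) <;> rw [SetLike.mem_coe, Gamma0_mem] <;> decide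

theorem parabolic_eleven_zero_one_mem_H : parabolic 11 0 1 ∈ H := by
  rw [show parabolic 11 0 1 = m2⁻¹ by decide]
  exact inv_mem m2_mem_H

theorem parabolic_eleven_one_three_mem_H : parabolic 11 1 3 ∈ H := by
  rw [show parabolic 11 1 3 = m5 * m6⁻¹ * m4⁻¹ * m2 * m3 * T⁻¹ by decide]
  apply_rules [mul_mem, inv_mem, T_mem_H, m2_mem_H, m3_mem_H, m4_mem_H, m5_mem_H, m6_mem_H]

theorem parabolic_one_three_eleven_mem_H : parabolic 1 3 11 ∈ H := by
  rw [show parabolic 1 3 11 = m4 * m6 * m3⁻¹ * m5⁻¹ by decide]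
  apply_rules [mul_mem, inv_mem, m3_mem_H, m4_mem_H, m5_mem_H, m6_mem_H]

theorem parabolic_eleven_neg_one_three_mem_H : parabolic 11 (-1) 3 ∈ H :=
  (parabolic_mem_iff m5_mem_H).1
    (by simpa [m5, parabolic_neg_neg] using parabolic_eleven_one_three_mem_H)

theorem parabolic_eleven_three_eleven_mem_H : parabolic 11 3 11 ∈ H := by
  have h := zpow_mem parabolic_one_three_eleven_mem_H 11
  rwa [parabolic_zpow, mul_one] at h

theorem parabolic_eleven_neg_three_eleven_mem_H : parabolic 11 (-3) 11 ∈ H :=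
  (parabolic_mem_iff m5_mem_H).1 (by simpa [m5] using parabolic_eleven_three_eleven_mem_H)

theorem parabolic_eleven_four_eleven_mem_H : parabolic 11 4 11 ∈ H :=
  (parabolic_mem_iff m4_mem_H).1
    (by simpa [m4, parabolic_neg_neg] using parabolic_eleven_three_eleven_mem_H)

theorem parabolic_eleven_neg_four_eleven_mem_H : parabolic 11 (-4) 11 ∈ H :=
  (parabolic_mem_iff m3_mem_H).1 (by simpa [m3] using parabolic_eleven_neg_three_eleven_mem_H)

theorem parabolic_eleven_mem_H_of_reduced {a c : ℤ} (hc : 0 < c) (ha : -c ≤ 2 * a)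
    (ha' : 2 * a ≤ c) (ih : ∀ a' c', -c < c' → c' < c → parabolic 11 a' c' ∈ H) :
    parabolic 11 a c ∈ H := by
  have step : ∀ g ∈ H, ∀ r s : ℤ, g 1 0 = r → g 1 1 = s → -c < r * a + s * c →
      r * a + s * c < c → parabolic 11 a c ∈ H := by
    rintro g hg r s rfl rfl h₁ h₂
    exact (parabolic_mem_iff hg).1 (ih _ _ h₁ h₂)
  have cusp : ∀ p q, parabolic 11 p q ∈ H → ∀ k, a = k * p → c = k * q →
      parabolic 11 a c ∈ H := by
    rintro p q h k rfl rfl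
    exact parabolic_mul_mul_mem h k
  -- `a / c` lies either inside the isometric circle of one of `m2, …, m6` and their inverses,
  -- or at one of the cusps `0, ±1/3, ±3/11, ±4/11` where these circles meet
  rcases (by omega : 11 * a < -4 * c ∨ 11 * a = -4 * c ∨ -4 * c < 11 * a ∧ 3 * a < -c ∨
      3 * a = -c ∨ -c < 3 * a ∧ 11 * a < -3 * c ∨ 11 * a = -3 * c ∨
      -3 * c < 11 * a ∧ 11 * a < -c ∨ -c ≤ 11 * a ∧ a < 0 ∨ a = 0 ∨ 0 < a ∧ 11 * a ≤ c ∨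
      c < 11 * a ∧ 11 * a < 3 * c ∨ 11 * a = 3 * c ∨ 3 * c < 11 * a ∧ 3 * a < c ∨ 3 * a = c ∨
      c < 3 * a ∧ 11 * a < 4 * c ∨ 11 * a = 4 * c ∨ 4 * c < 11 * a)
    with h | h | h | h | h | h | h | h | h | h | h | h | h | h | h | h | h
  · exact step m3 m3_mem_H 11 5 rfl rfl (by omega) (by omega)
  · exact cusp _ _ parabolic_eleven_neg_four_eleven_mem_H (c / 11) (by omega) (by omega)
  · exact step m6 m6_mem_H 66 23 rfl rfl (by omega) (by omega)
  · exact cusp _ _ parabolic_eleven_neg_one_three_mem_H (c / 3) (by omega) (by omega)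
  · exact step m5 m5_mem_H 33 10 rfl rfl (by omega) (by omega)
  · exact cusp _ _ parabolic_eleven_neg_three_eleven_mem_H (c / 11) (by omega) (by omega)
  · exact step m3⁻¹ (inv_mem m3_mem_H) (-11) (-2) rfl rfl (by omega) (by omega)
  · exact step m2 m2_mem_H 11 1 rfl rfl (by omega) (by omega)
  · exact cusp _ _ parabolic_eleven_zero_one_mem_H c (by omega) (by omega)
  · exact step m2⁻¹ (inv_mem m2_mem_H) (-11) 1 rfl rfl (by omega) (by omega)
  · exact step m4⁻¹ (inv_mem m4_mem_H) (-11) 2 rfl rfl (by omega) (by omega)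
  · exact cusp _ _ parabolic_eleven_three_eleven_mem_H (c / 11) (by omega) (by omega)
  · exact step m5⁻¹ (inv_mem m5_mem_H) (-33) 10 rfl rfl (by omega) (by omega)
  · exact cusp _ _ parabolic_eleven_one_three_mem_H (c / 3) (by omega) (by omega)
  · exact step m6⁻¹ (inv_mem m6_mem_H) (-66) 23 rfl rfl (by omega) (by omega)
  · exact cusp _ _ parabolic_eleven_four_eleven_mem_H (c / 11) (by omega) (by omega)
  · exact step m4 m4_mem_H 11 (-5) rfl rfl (by omega) (by omega)

theorem parabolic_eleven_mem_H (a c : ℤ) : parabolic 11 a c ∈ H := by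
  induction hm : c.natAbs using Nat.strong_induction_on generalizing a c with
  | _ m ih =>
  wlog hc : 0 < c generalizing a c
  · rcases (by omega : c = 0 ∨ 0 < -c) with rfl | hc'
    · have hT : parabolic 11 1 0 ∈ H := by
        rw [← T_zpow_eq_parabolic]
        exact zpow_mem T_mem_H 11
      simpa using parabolic_mul_mul_mem hT a
    · rw [← parabolic_neg_neg]
      exact this (-a) (-c) (by omega) hc'
  obtain ⟨q, r, hr, hrc, rfl⟩ : ∃ q r, 0 ≤ r ∧ r < c ∧ a = r + q * c :=
    ⟨a / c, a % c, Int.emod_nonneg _ hc.ne', Int.emod_lt_of_pos _ hc,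
      (Int.emod_add_ediv_mul a c).symm⟩
  have ih' : ∀ a' c', -c < c' → c' < c → parabolic 11 a' c' ∈ H :=
    fun a' c' h₁ h₂ => ih _ (by omega) a' c' rfl
  rcases le_or_gt (2 * r) c with h | h
  · exact parabolic_add_mul_mem T_mem_H (parabolic_eleven_mem_H_of_reduced hc (by omega) h ih') q
  · have := parabolic_add_mul_mem T_mem_H
      (parabolic_eleven_mem_H_of_reduced (a := r - c) hc (by omega) (by omega) ih') (q + 1)
    convert this using 2
    ring

/-- The level of `H` is `11`: `H` contains the normal closure of `T¹¹` in `SL(2,ℤ)`,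
but not the normal closure of `Tⁿ` for any `1 ≤ n ≤ 10`. -/
theorem level_of_H_eq_eleven :
    Subgroup.normalClosure {T ^ (11 : ℕ)} ≤ H ∧
      ∀ n : ℕ, 1 ≤ n → n ≤ 10 → ¬Subgroup.normalClosure {T ^ n} ≤ H :=
  ⟨normalClosure_T_pow_le parabolic_eleven_mem_H, fun n h₁ h₁₀ hle =>
    not_normalClosure_T_pow_le_Gamma0 (N := 11) (by omega) (hle.trans H_le_Gamma0)⟩
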